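/- arXiv:2207.02136 — 3 statements merged into one kernel-verified Lean document; each statement's English description precedes it below -/
import Mathlib

section
/- The minimum flow decomposition problem with integer (possibly negative) path weights on DAGs reduces to the minimum cost circulation decomposition problem: given an s-t DAG G with flow X, adding an edge (t,s) with flow value |X|, cost 1 on (t,s) and cost 0 on all other edges yields a graph G' with circulation X' such that the minimum size of a flow decomposition of (G,X) equals the minimum cost of a circulation decomposition of (G',X'). -/
open Finset

def IsWalk {V E : Type} (src tgt : E → V) : V → V → List E → Prop
  | a, b, [] => a = b
  | a, b, e :: L => src e = a ∧ IsWalk src tgt (tgt e) b L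

def IsPath {V E : Type} (src tgt : E → V) (s t : V) (L : List E) : Prop :=
  L ≠ [] ∧ IsWalk src tgt s t L

def IsDAG {V E : Type} (src tgt : E → V) : Prop :=
  ∀ (v : V) (L : List E), L ≠ [] → ¬ IsWalk src tgt v v L

/-- An integer flow: conservation at every internal vertex. -/
def IsFlowZ {V E : Type} [Fintype E] [DecidableEq V] (src tgt : E → V) (s t : V)
    (X : E → ℤ) : Prop :=
  ∀ v : V, v ≠ s → v ≠ t →
    (∑ e, if tgt e = v then X e else 0) = ∑ e, if src e = v then X e else 0

def IsCircZ {V E : Type} [Fintype E] [DecidableEq V] (src tgt : E → V) (X : E → ℤ) : Prop :=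
  ∀ v : V, (∑ e, if tgt e = v then X e else 0) = ∑ e, if src e = v then X e else 0

/-- The minimum size of a flow decomposition of `X` into integer-weighted `s`-`t` paths. -/
noncomputable def mfdZ {V E : Type} [Fintype E] [DecidableEq E] (src tgt : E → V)
    (s t : V) (X : E → ℤ) : ℕ :=
  sInf {k | ∃ (P : Fin k → List E) (w : Fin k → ℤ),
    (∀ i, IsPath src tgt s t (P i)) ∧
    ∀ e, X e = ∑ i, if e ∈ P i then w i else 0}

/-!
Let `G'` be `G` together with the back edge `(t, s)`. An `s`-`t` path `P` of `G` closes up to a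
cycle of `G'` through the back edge, whose indicator is a nonnegative circulation of cost `1`;
so a path decomposition of size `k` is a circulation decomposition of cost `k`. The weights also
match the flow value: a walk in a DAG never returns to its start, so every `s`-`t` path leaves `s`
exactly once. Conversely, a nonnegative integer circulation `Y` of `G'` is a sum of `Y(t,s)` such
indicators: in the support of a nonnegative circulation every edge can be followed by another
one, so the support contains a cycle, which must use the back edge because `G` is acyclic;
removing the corresponding `s`-`t` path lowers `Y(t,s)` by one. Replacing each circulation of a
decomposition by its paths turns a circulation decomposition of cost `k` into a path
decomposition of size `k`.
-/

variable {V E : Type}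

namespace IsWalk

variable {src tgt : E → V}

theorem append_iff {a b : V} {L₁ L₂ : List E} :
    IsWalk src tgt a b (L₁ ++ L₂) ↔ ∃ c, IsWalk src tgt a c L₁ ∧ IsWalk src tgt c b L₂ := by
  induction L₁ generalizing a with
  | nil => exact ⟨fun h => ⟨a, rfl, h⟩, fun ⟨_, rfl, h⟩ => h⟩
  | cons e L ih =>
    simp only [List.cons_append, IsWalk, ih]
    exact ⟨fun ⟨he, c, h₁, h₂⟩ => ⟨c, ⟨he, h₁⟩, h₂⟩, fun ⟨c, ⟨he, h₁⟩, h₂⟩ => ⟨he, c, h₁, h₂⟩⟩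

theorem exists_cycle_of_not_nodup {a b : V} {L : List E} (h : IsWalk src tgt a b L)
    (hL : ¬ L.Nodup) : ∃ v M, M ≠ [] ∧ IsWalk src tgt v v M ∧ ∀ e ∈ M, e ∈ L := by
  induction L generalizing a with
  | nil => exact absurd List.nodup_nil hL
  | cons e L ih =>
    obtain ⟨-, hw⟩ := h
    by_cases he : e ∈ L
    · obtain ⟨A, B, rfl⟩ := List.append_of_mem he
      obtain ⟨c, hA, hc, -⟩ := append_iff.mp hw
      refine ⟨src e, e :: A, List.cons_ne_nil _ _, ⟨rfl, hc ▸ hA⟩, ?_⟩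
      intro f hf
      simp only [List.mem_cons, List.mem_append] at hf ⊢
      tauto
    · obtain ⟨v, M, hM, hvM, hsub⟩ := ih hw (fun hnd => hL (List.nodup_cons.mpr ⟨he, hnd⟩))
      exact ⟨v, M, hM, hvM, fun f hf => List.mem_cons_of_mem e (hsub f hf)⟩

theorem balance [DecidableEq V] {a b : V} {L : List E} (h : IsWalk src tgt a b L) (v : V) :
    (L.map fun e => if tgt e = v then (1 : ℤ) else 0).sum + (if a = v then 1 else 0) =
      (L.map fun e => if src e = v then (1 : ℤ) else 0).sum + (if b = v then 1 else 0) := by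
  induction L generalizing a with
  | nil => cases h; rfl
  | cons e L ih =>
    obtain ⟨rfl, hw⟩ := h
    simp only [List.map_cons, List.sum_cons]
    linarith [ih hw]

end IsWalk

namespace IsDAG

variable {src tgt : E → V}

theorem nodup (hdag : IsDAG src tgt) {a b : V} {L : List E} (h : IsWalk src tgt a b L) :
    L.Nodup := by
  by_contra hL
  obtain ⟨v, M, hM, hvM, -⟩ := h.exists_cycle_of_not_nodup hL
  exact hdag v M hM hvM

theorem tgt_ne_of_mem (hdag : IsDAG src tgt) {a b : V} {L : List E} (h : IsWalk src tgt a b L)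
    {e : E} (he : e ∈ L) : tgt e ≠ a := by
  intro hea
  obtain ⟨A, B, rfl⟩ := List.append_of_mem he
  obtain ⟨c, hA, hc, -⟩ := IsWalk.append_iff.mp h
  exact hdag a (A ++ [e]) (by simp) (IsWalk.append_iff.mpr ⟨c, hA, hc, hea⟩)

end IsDAG

namespace IsCircZ

variable [Fintype E] [DecidableEq V] {src tgt : E → V} {Y : E → ℤ}

theorem sub {Z : E → ℤ} (hY : IsCircZ src tgt Y) (hZ : IsCircZ src tgt Z) :
    IsCircZ src tgt (Y - Z) := by
  intro v
  have split (g : E → V) : (∑ e, if g e = v then (Y - Z) e else 0) =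
      (∑ e, if g e = v then Y e else 0) - ∑ e, if g e = v then Z e else 0 := by
    rw [← Finset.sum_sub_distrib]
    exact Finset.sum_congr rfl fun e _ => by split_ifs <;> simp
  rw [split, split, hY v, hZ v]

theorem exists_pos_out (hY : IsCircZ src tgt Y) (hnn : ∀ e, 0 ≤ Y e) {e : E} (he : 0 < Y e) :
    ∃ e', src e' = tgt e ∧ 0 < Y e' := by
  have hin : Y e ≤ ∑ f, if tgt f = tgt e then Y f else 0 := by
    simpa using Finset.single_le_sum (f := fun f => if tgt f = tgt e then Y f else 0)
      (fun f _ => by split_ifs <;> simp [hnn]) (Finset.mem_univ e)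
  rw [hY] at hin
  obtain ⟨f, -, hf⟩ := Finset.exists_lt_of_sum_lt (s := Finset.univ) (f := 0)
    (g := fun f => if src f = tgt e then Y f else 0) (by simpa using he.trans_le hin)
  split_ifs at hf with hsrc
  · exact ⟨f, hsrc, hf⟩
  · exact absurd hf (lt_irrefl 0)

theorem exists_pos_walk (hY : IsCircZ src tgt Y) (hnn : ∀ e, 0 ≤ Y e) {e : E} (he : 0 < Y e)
    (n : ℕ) : ∃ a b L, L.length = n ∧ IsWalk src tgt a b L ∧ (∀ f ∈ L, 0 < Y f) ∧
      ∃ f, tgt f = b ∧ 0 < Y f := by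
  induction n with
  | zero => exact ⟨tgt e, tgt e, [], rfl, rfl, by simp, e, rfl, he⟩
  | succ n ih =>
    obtain ⟨a, b, L, hlen, hL, hpos, f, rfl, hf⟩ := ih
    obtain ⟨f', hsrc, hf'⟩ := hY.exists_pos_out hnn hf
    refine ⟨a, tgt f', L ++ [f'], by simp [hlen], ?_, ?_, f', rfl, hf'⟩
    · exact IsWalk.append_iff.mpr ⟨tgt f, hL, hsrc, rfl⟩
    · simpa [or_imp, forall_and] using ⟨hpos, hf'⟩

theorem exists_pos_cycle (hY : IsCircZ src tgt Y) (hnn : ∀ e, 0 ≤ Y e) {e : E} (he : 0 < Y e) :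
    ∃ v M, M ≠ [] ∧ IsWalk src tgt v v M ∧ ∀ f ∈ M, 0 < Y f := by
  obtain ⟨a, b, L, hlen, hL, hpos, -⟩ := hY.exists_pos_walk hnn he (Fintype.card E + 1)
  have hnd : ¬ L.Nodup := fun hnd => by have := hnd.length_le_card; omega
  obtain ⟨v, M, hM, hvM, hsub⟩ := hL.exists_cycle_of_not_nodup hnd
  exact ⟨v, M, hM, hvM, fun f hf => hpos f (hsub f hf)⟩

end IsCircZ

/- In `G'` the edge type is `Option E`, and `none` is the back edge `(t, s)`. -/
abbrev augSrc (src : E → V) (t : V) : Option E → V := fun e => e.elim t src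

abbrev augTgt (tgt : E → V) (s : V) : Option E → V := fun e => e.elim s tgt

section Augmented

variable {src tgt : E → V} {s t : V}

theorem IsWalk.exists_eq_map_some_of_aug {a b : V} {M : List (Option E)}
    (h : IsWalk (augSrc src t) (augTgt tgt s) a b M) (hM : none ∉ M) :
    ∃ L, IsWalk src tgt a b L ∧ M = L.map some := by
  induction M generalizing a with
  | nil => exact ⟨[], h, rfl⟩
  | cons o M ih =>
    obtain ⟨ho, hw⟩ := h
    obtain _ | e := o
    · exact absurd List.mem_cons_self hM
    · obtain ⟨L, hL, rfl⟩ := ih hw (fun h => hM (List.mem_cons_of_mem _ h))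
      exact ⟨e :: L, ⟨ho, hL⟩, rfl⟩

theorem IsWalk.exists_isWalk_of_aug {a : V} {M : List (Option E)}
    (h : IsWalk (augSrc src t) (augTgt tgt s) a t M) :
    ∃ L, IsWalk src tgt a t L ∧ ∀ e ∈ L, some e ∈ M := by
  induction M generalizing a with
  | nil => exact ⟨[], h, by simp⟩
  | cons o M ih =>
    obtain ⟨ho, hw⟩ := h
    obtain _ | e := o
    · exact ⟨[], ho.symm, by simp⟩
    · obtain ⟨L, hL, hsub⟩ := ih hw
      exact ⟨e :: L, ⟨ho, hL⟩, List.forall_mem_cons.mpr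
        ⟨List.mem_cons_self, fun f hf => List.mem_cons_of_mem _ (hsub f hf)⟩⟩

theorem IsDAG.none_mem_of_aug_cycle (hdag : IsDAG src tgt) {v : V} {M : List (Option E)}
    (hM : M ≠ []) (h : IsWalk (augSrc src t) (augTgt tgt s) v v M) : none ∈ M := by
  by_contra hnone
  obtain ⟨L, hL, rfl⟩ := h.exists_eq_map_some_of_aug hnone
  exact hdag v L (by simpa using hM) hL

theorem IsWalk.exists_isWalk_of_aug_cycle {v : V} {M : List (Option E)}
    (h : IsWalk (augSrc src t) (augTgt tgt s) v v M) (hM : none ∈ M) :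
    ∃ L, IsWalk src tgt s t L ∧ ∀ e ∈ L, some e ∈ M := by
  obtain ⟨A, B, rfl⟩ := List.append_of_mem hM
  obtain ⟨c, hA, rfl, hB⟩ := IsWalk.append_iff.mp h
  -- rotate the cycle so that it starts right after the back edge
  obtain ⟨L, hL, hsub⟩ := (IsWalk.append_iff.mpr ⟨v, hB, hA⟩).exists_isWalk_of_aug
  refine ⟨L, hL, fun e he => ?_⟩
  have := hsub e he
  simp only [List.mem_append, List.mem_cons] at this ⊢
  tauto

variable [DecidableEq E]

def pathCirc (L : List E) : Option E → ℤ := fun o => o.elim 1 fun e => if e ∈ L then 1 else 0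

theorem ite_mem_eq_mul_pathCirc (L : List E) (e : E) (w : ℤ) :
    (if e ∈ L then w else 0) = w * pathCirc L (some e) := by
  simp [pathCirc]

theorem pathCirc_nonneg (L : List E) (o : Option E) : 0 ≤ pathCirc L o := by
  cases o <;> simp [pathCirc, apply_ite]

variable [Fintype E] [DecidableEq V]

theorem sum_ite_pathCirc_eq {L : List E} (hL : L.Nodup) (g : E → V) (v : V) :
    (∑ e, if g e = v then pathCirc L (some e) else 0) =
      (L.map fun e => if g e = v then (1 : ℤ) else 0).sum := by
  rw [← List.sum_toFinset _ hL, ← Finset.univ_inter L.toFinset, ← Finset.sum_ite_mem]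
  refine Finset.sum_congr rfl fun e _ => ?_
  simp only [pathCirc, Option.elim, List.mem_toFinset]
  split_ifs <;> rfl

theorem IsDAG.isCircZ_pathCirc (hdag : IsDAG src tgt) {L : List E} (hL : IsWalk src tgt s t L) :
    IsCircZ (augSrc src t) (augTgt tgt s) (pathCirc L) := by
  intro v
  simp only [Fintype.sum_option, Option.elim, sum_ite_pathCirc_eq (hdag.nodup hL)]
  simp only [pathCirc, Option.elim]
  linarith [hL.balance v]

theorem IsDAG.sum_src_pathCirc (hdag : IsDAG src tgt) (hst : s ≠ t) {L : List E}
    (hL : IsWalk src tgt s t L) :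
    (∑ e, if src e = s then pathCirc L (some e) else 0) = 1 := by
  have hin : (L.map fun e => if tgt e = s then (1 : ℤ) else 0).sum = 0 :=
    List.sum_eq_zero fun x hx => by
      obtain ⟨e, he, rfl⟩ := List.mem_map.mp hx
      exact if_neg (hdag.tgt_ne_of_mem hL he)
  have := hL.balance s
  rw [if_pos rfl, if_neg hst.symm, hin] at this
  rw [sum_ite_pathCirc_eq (hdag.nodup hL)]
  linarith

end Augmented

section Decomposition

variable [Fintype E] [DecidableEq V] {src tgt : E → V} {s t : V}

theorem IsDAG.eq_zero_of_isCircZ_aug (hdag : IsDAG src tgt) {Y : Option E → ℤ}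
    (hY : IsCircZ (augSrc src t) (augTgt tgt s) Y) (hnn : ∀ o, 0 ≤ Y o) (h0 : Y none = 0) :
    Y = 0 := by
  funext o
  by_contra ho
  obtain ⟨v, M, hM, hvM, hpos⟩ := hY.exists_pos_cycle hnn (lt_of_le_of_ne (hnn o) (Ne.symm ho))
  exact (hpos none (hdag.none_mem_of_aug_cycle hM hvM)).ne' h0

theorem IsDAG.exists_isPath_pos_of_isCircZ_aug (hdag : IsDAG src tgt) (hst : s ≠ t)
    {Y : Option E → ℤ} (hY : IsCircZ (augSrc src t) (augTgt tgt s) Y) (hnn : ∀ o, 0 ≤ Y o)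
    (hpos : 0 < Y none) : ∃ L, IsPath src tgt s t L ∧ ∀ e ∈ L, 0 < Y (some e) := by
  obtain ⟨v, M, hM, hvM, hMpos⟩ := hY.exists_pos_cycle hnn hpos
  obtain ⟨L, hL, hsub⟩ := hvM.exists_isWalk_of_aug_cycle (hdag.none_mem_of_aug_cycle hM hvM)
  refine ⟨L, ⟨?_, hL⟩, fun e he => hMpos _ (hsub e he)⟩
  rintro rfl
  exact hst hL

variable [DecidableEq E]

theorem IsDAG.exists_paths_of_isCircZ_aug (hdag : IsDAG src tgt) (hst : s ≠ t) (m : ℕ)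
    {Y : Option E → ℤ} (hY : IsCircZ (augSrc src t) (augTgt tgt s) Y) (hnn : ∀ o, 0 ≤ Y o)
    (hm : Y none = m) :
    ∃ P : Fin m → List E, (∀ j, IsPath src tgt s t (P j)) ∧ Y = ∑ j, pathCirc (P j) := by
  induction m generalizing Y with
  | zero =>
    exact ⟨Fin.elim0, fun j => j.elim0, by simpa using hdag.eq_zero_of_isCircZ_aug hY hnn hm⟩
  | succ m ih =>
    obtain ⟨L, hL, hpos⟩ := hdag.exists_isPath_pos_of_isCircZ_aug hst hY hnn (by omega)
    have hnn' : ∀ o, 0 ≤ (Y - pathCirc L) o := by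
      rintro (_ | e)
      · simp [pathCirc, hm]
      · by_cases he : e ∈ L
        · simpa [pathCirc, he] using Int.add_one_le_of_lt (hpos e he)
        · simpa [pathCirc, he] using hnn (some e)
    obtain ⟨P, hP, hsum⟩ :=
      ih (hY.sub (hdag.isCircZ_pathCirc hL.2)) hnn' (by simp [pathCirc, hm])
    refine ⟨Fin.cons L P, Fin.cases hL hP, ?_⟩
    rw [Fin.sum_univ_succ, Fin.cons_zero]
    simp only [Fin.cons_succ, ← hsum, add_sub_cancel]

end Decomposition

section Reduction

variable [Fintype E] [DecidableEq V]

def HasCircDecompOfCost (src tgt : E → V) (s t : V) (X : E → ℤ) (n : ℕ) : Prop :=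
  ∃ (k : ℕ) (Y : Fin k → Option E → ℤ) (w : Fin k → ℤ),
    (∀ i, IsCircZ (augSrc src t) (augTgt tgt s) (Y i)) ∧
    (∀ i e, 0 ≤ Y i e) ∧
    (∀ e : E, X e = ∑ i, w i * Y i (some e)) ∧
    ((∑ e, if src e = s then X e else 0) = ∑ i, w i * Y i none) ∧
    (n : ℤ) = ∑ i, Y i none

variable [DecidableEq E] {src tgt : E → V} {s t : V}

theorem IsDAG.hasCircDecompOfCost_of_paths (hdag : IsDAG src tgt) (hst : s ≠ t) {X : E → ℤ}
    {n : ℕ} {P : Fin n → List E} {w : Fin n → ℤ} (hP : ∀ i, IsPath src tgt s t (P i))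
    (hX : ∀ e, X e = ∑ i, if e ∈ P i then w i else 0) :
    HasCircDecompOfCost src tgt s t X n := by
  simp only [ite_mem_eq_mul_pathCirc] at hX
  refine ⟨n, fun i => pathCirc (P i), w, fun i => hdag.isCircZ_pathCirc (hP i).2,
    fun i => pathCirc_nonneg _, hX, ?_, by simp [pathCirc]⟩
  calc (∑ e, if src e = s then X e else 0)
      = ∑ i, w i * ∑ e, if src e = s then pathCirc (P i) (some e) else 0 := by
        simp_rw [Finset.mul_sum, mul_ite, mul_zero]
        rw [Finset.sum_comm]
        exact Finset.sum_congr rfl fun e _ => by split_ifs <;> simp [hX]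
    _ = ∑ i, w i * pathCirc (P i) none := by
        simp only [hdag.sum_src_pathCirc hst (hP _).2]
        simp [pathCirc]

theorem IsDAG.exists_paths_of_hasCircDecompOfCost (hdag : IsDAG src tgt) (hst : s ≠ t)
    {X : E → ℤ} {n : ℕ} (h : HasCircDecompOfCost src tgt s t X n) :
    ∃ (P : Fin n → List E) (w : Fin n → ℤ),
      (∀ i, IsPath src tgt s t (P i)) ∧ ∀ e, X e = ∑ i, if e ∈ P i then w i else 0 := by
  obtain ⟨k, Y, w, hY, hnn, hX, -, hn⟩ := h
  choose P hP hYP using fun i => hdag.exists_paths_of_isCircZ_aug hst (Y i none).toNat (hY i)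
    (hnn i) (Int.toNat_of_nonneg (hnn i none)).symm
  obtain rfl : n = ∑ i, (Y i none).toNat := by
    zify
    simpa [Int.toNat_of_nonneg (hnn _ none)] using hn
  let σ := (finSigmaFinEquiv (n := fun i => (Y i none).toNat)).symm
  refine ⟨fun j => P (σ j).1 (σ j).2, fun j => w (σ j).1, fun j => hP _ _, fun e => ?_⟩
  calc X e = ∑ i, w i * Y i (some e) := hX e
    _ = ∑ i, ∑ j, if e ∈ P i j then w i else 0 := by
        simp_rw [hYP, Finset.sum_apply, Finset.mul_sum, ite_mem_eq_mul_pathCirc]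
    _ = ∑ j, if e ∈ P (σ j).1 (σ j).2 then w (σ j).1 else 0 := by
        rw [← Fintype.sum_sigma', Equiv.sum_comp σ (fun x => if e ∈ P x.1 x.2 then w x.1 else 0)]

end Reduction

theorem stmt_14_general {V E : Type} [Fintype E] [DecidableEq V] [DecidableEq E]
    (src tgt : E → V) (s t : V)
    (hdag : IsDAG src tgt) (hst : s ≠ t)
    (X : E → ℤ) :
    mfdZ src tgt s t X =
      sInf {n : ℕ | ∃ (k : ℕ) (Y : Fin k → Option E → ℤ) (w : Fin k → ℤ),
        (∀ i, IsCircZ (fun e => e.elim t src) (fun e => e.elim s tgt) (Y i)) ∧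
        (∀ i e, 0 ≤ Y i e) ∧
        (∀ e : E, X e = ∑ i, w i * Y i (some e)) ∧
        ((∑ e, if src e = s then X e else 0) = ∑ i, w i * Y i none) ∧
        (n : ℤ) = ∑ i, Y i none} := by
  unfold mfdZ
  congr 1
  ext n
  exact ⟨fun ⟨_, _, hP, hX⟩ => hdag.hasCircDecompOfCost_of_paths hst hP hX,
    hdag.exists_paths_of_hasCircDecompOfCost hst⟩

/-- Adding an edge `(t,s)` of cost `1` (all original edges having cost `0`) carrying
the total flow value turns the flow `X` into a circulation `X'`, and the minimum size
of an integer-weight flow decomposition of `(G,X)` equals the minimum cost of an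
integer-weight circulation decomposition of `(G',X')` into nonnegative circulations. -/
theorem stmt_14 {V E : Type} [Fintype E] [DecidableEq V] [DecidableEq E]
    (src tgt : E → V) (s t : V)
    (hdag : IsDAG src tgt) (hs : ∀ e, tgt e ≠ s) (ht : ∀ e, src e ≠ t) (hst : s ≠ t)
    (X : E → ℤ) (hflow : IsFlowZ src tgt s t X) :
    mfdZ src tgt s t X =
      sInf {n : ℕ | ∃ (k : ℕ) (Y : Fin k → Option E → ℤ) (w : Fin k → ℤ),
        (∀ i, IsCircZ (fun e => e.elim t src) (fun e => e.elim s tgt) (Y i)) ∧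
        (∀ i e, 0 ≤ Y i e) ∧
        (∀ e : E, X e = ∑ i, w i * Y i (some e)) ∧
        ((∑ e, if src e = s then X e else 0) = ∑ i, w i * Y i none) ∧
        (n : ℤ) = ∑ i, Y i none} :=
  stmt_14_general src tgt s t hdag hst X
end

section
/- There exists a DAG G and a flow X : E → ℕ such that X admits a flow decomposition of size 4 using integer (possibly negative) path weights, but every flow decomposition using only positive integer weights requires at least 5 paths. -/
open Finset

def IsFlowN {V E : Type} [Fintype E] [DecidableEq V] (src tgt : E → V) (s t : V)
    (X : E → ℕ) : Prop :=
  ∀ v : V, v ≠ s → v ≠ t →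
    (∑ e, if tgt e = v then X e else 0) = ∑ e, if src e = v then X e else 0

/- Auxiliary: the concrete graph -/
def src7 : Fin 7 → Fin 4 := ![0, 0, 1, 2, 2, 1, 0]
def tgt7 : Fin 7 → Fin 4 := ![1, 1, 2, 3, 3, 3, 2]
def X7 : Fin 7 → ℕ := ![4, 5, 1, 4, 2, 8, 5]


def decWalk {V E : Type} [DecidableEq V] (src tgt : E → V) :
    (L : List E) → (a b : V) → Decidable (IsWalk src tgt a b L)
  | [], a, b => decidable_of_iff (a = b) Iff.rfl
  | e :: L, a, b =>
    haveI := decWalk src tgt L (tgt e) b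
    decidable_of_iff (src e = a ∧ IsWalk src tgt (tgt e) b L) Iff.rfl

instance {V E : Type} [DecidableEq V] (src tgt : E → V) (a b : V) (L : List E) :
    Decidable (IsWalk src tgt a b L) := decWalk src tgt L a b

instance {V E : Type} [DecidableEq V] [DecidableEq E] (src tgt : E → V) (s t : V)
    (L : List E) : Decidable (IsPath src tgt s t L) :=
  decidable_of_iff (L ≠ [] ∧ IsWalk src tgt s t L) Iff.rfl

lemma src_lt_tgt : ∀ e, src7 e < tgt7 e := by decide

lemma walk_lt : ∀ (L : List (Fin 7)) (a b : Fin 4),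
    IsWalk src7 tgt7 a b L → L ≠ [] → a < b := by
  intro L
  induction L with
  | nil => intro a b _ h; exact absurd rfl h
  | cons e L' ih =>
    intro a b h _
    obtain ⟨h1, h2⟩ := h
    rcases eq_or_ne L' [] with rfl | hne
    · have hb : tgt7 e = b := h2
      rw [← h1, ← hb]; exact src_lt_tgt e
    · exact lt_trans (h1 ▸ src_lt_tgt e) (ih (tgt7 e) b h2 hne)

lemma dag7 : IsDAG src7 tgt7 := by
  intro v L hne h
  exact absurd (walk_lt L v v h hne) (lt_irrefl v)

lemma walk3 : ∀ L, IsWalk src7 tgt7 3 3 L → L = [] := by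
  intro L h
  cases L with
  | nil => rfl
  | cons e L' =>
    obtain ⟨h1, h2⟩ := h
    fin_cases e <;> exact absurd h1 (by decide)

lemma walk2 : ∀ L, IsWalk src7 tgt7 2 3 L → L = [3] ∨ L = [4] := by
  intro L h
  cases L with
  | nil => exact absurd h (by decide)
  | cons e L' =>
    obtain ⟨h1, h2⟩ := h
    fin_cases e
    · exact absurd h1 (by decide)
    · exact absurd h1 (by decide)
    · exact absurd h1 (by decide)
    · have h := walk3 L' h2; subst h; exact Or.inl (by decide)
    · have h := walk3 L' h2; subst h; exact Or.inr (by decide)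
    · exact absurd h1 (by decide)
    · exact absurd h1 (by decide)

lemma walk1 : ∀ L, IsWalk src7 tgt7 1 3 L →
    L = [2, 3] ∨ L = [2, 4] ∨ L = [5] := by
  intro L h
  cases L with
  | nil => exact absurd h (by decide)
  | cons e L' =>
    obtain ⟨h1, h2⟩ := h
    fin_cases e
    · exact absurd h1 (by decide)
    · exact absurd h1 (by decide)
    · rcases walk2 L' h2 with rfl | rfl
      · left; rfl
      · right; left; rfl
    · exact absurd h1 (by decide)
    · exact absurd h1 (by decide)
    · have h := walk3 L' h2; subst h; exact Or.inr (Or.inr (by decide))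
    · exact absurd h1 (by decide)

lemma walk0 : ∀ L, IsWalk src7 tgt7 0 3 L →
    L = [0, 2, 3] ∨ L = [0, 2, 4] ∨ L = [0, 5] ∨
    L = [1, 2, 3] ∨ L = [1, 2, 4] ∨ L = [1, 5] ∨
    L = [6, 3] ∨ L = [6, 4] := by
  intro L h
  cases L with
  | nil => exact absurd h (by decide)
  | cons e L' =>
    obtain ⟨h1, h2⟩ := h
    fin_cases e
    · rcases walk1 L' h2 with rfl | rfl | rfl
      · exact Or.inl (by decide)
      · exact Or.inr (Or.inl (by decide))
      · exact Or.inr (Or.inr (Or.inl (by decide)))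
    · rcases walk1 L' h2 with rfl | rfl | rfl
      · exact Or.inr (Or.inr (Or.inr (Or.inl (by decide))))
      · exact Or.inr (Or.inr (Or.inr (Or.inr (Or.inl (by decide)))))
      · exact Or.inr (Or.inr (Or.inr (Or.inr (Or.inr (Or.inl (by decide))))))
    · exact absurd h1 (by decide)
    · exact absurd h1 (by decide)
    · exact absurd h1 (by decide)
    · exact absurd h1 (by decide)
    · rcases walk2 L' h2 with rfl | rfl
      · exact Or.inr (Or.inr (Or.inr (Or.inr (Or.inr (Or.inr (Or.inl (by decide)))))))
      · exact Or.inr (Or.inr (Or.inr (Or.inr (Or.inr (Or.inr (Or.inr (by decide)))))))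

/-- There is a DAG with a nonnegative flow admitting a flow decomposition of size `4`
with integer (possibly negative) weights, while every decomposition with positive
integer weights needs at least `5` paths. -/
theorem stmt_15 :
    ∃ (n m : ℕ) (src tgt : Fin m → Fin n) (s t : Fin n) (X : Fin m → ℕ),
      IsDAG src tgt ∧ (∀ e, tgt e ≠ s) ∧ (∀ e, src e ≠ t) ∧
      IsFlowN src tgt s t X ∧
      (∃ (P : Fin 4 → List (Fin m)) (w : Fin 4 → ℤ),
        (∀ i, IsPath src tgt s t (P i)) ∧
        ∀ e, (X e : ℤ) = ∑ i, if e ∈ P i then w i else 0) ∧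
      (∀ (k : ℕ) (P : Fin k → List (Fin m)) (w : Fin k → ℕ),
        (∀ i, IsPath src tgt s t (P i)) → (∀ i, 0 < w i) →
        (∀ e, X e = ∑ i, if e ∈ P i then w i else 0) → 5 ≤ k) := by
  refine ⟨4, 7, src7, tgt7, 0, 3, X7, dag7, by decide, by decide, by unfold IsFlowN; decide, ?_, ?_⟩
  · refine ⟨![[0, 2, 3], [1, 2, 4], [1, 5], [6, 4]], ![4, -3, 8, 5], ?_, ?_⟩
    · intro i; fin_cases i <;> decide
    · intro e; fin_cases e <;> decide
  · intro k P w hP hw hX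
    have hsum2 : ∑ i ∈ Finset.univ.filter (fun i => (2 : Fin 7) ∈ P i), w i = 1 := by
      rw [Finset.sum_filter, ← hX 2]; decide
    have hTcard : (Finset.univ.filter (fun i => (2 : Fin 7) ∈ P i)).card = 1 := by
      have h1 : (Finset.univ.filter (fun i => (2 : Fin 7) ∈ P i)).card ≤
          ∑ i ∈ Finset.univ.filter (fun i => (2 : Fin 7) ∈ P i), w i := by
        simpa using Finset.card_nsmul_le_sum
          (Finset.univ.filter (fun i => (2 : Fin 7) ∈ P i)) w 1 (fun i _ => hw i)
      have h2 : (Finset.univ.filter (fun i => (2 : Fin 7) ∈ P i)).Nonempty := by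
        rw [Finset.nonempty_iff_ne_empty]
        intro h
        rw [h] at hsum2
        simp at hsum2
      have h3 := Finset.card_pos.mpr h2
      omega
    obtain ⟨i0, hTi0⟩ := Finset.card_eq_one.mp hTcard
    have hmem2 : ∀ i, (2 : Fin 7) ∈ P i ↔ i = i0 := by
      intro i
      constructor
      · intro h
        have : i ∈ Finset.univ.filter (fun i => (2 : Fin 7) ∈ P i) := by
          simp [h]
        rw [hTi0] at this; simpa using this
      · intro h
        have hm : i0 ∈ Finset.univ.filter (fun j => (2 : Fin 7) ∈ P j) := by
          rw [hTi0]; simp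
        simp only [Finset.mem_filter] at hm
        rw [h]; exact hm.2
    have hwi0 : w i0 = 1 := by
      rw [hTi0, Finset.sum_singleton] at hsum2; exact hsum2
    have key : ∀ e : Fin 7, 2 ≤ X7 e → ∃ j, e ∈ P j ∧ j ≠ i0 := by
      intro e he
      by_contra hcon
      push_neg at hcon
      have hsub : Finset.univ.filter (fun i => e ∈ P i) ⊆ {i0} := by
        intro j hj
        simp only [Finset.mem_filter] at hj
        simp [hcon j hj.2]
      have hle : X7 e ≤ w i0 := by
        calc X7 e = ∑ i : Fin k, if e ∈ P i then w i else 0 := hX e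
          _ = ∑ i ∈ Finset.univ.filter (fun i => e ∈ P i), w i :=
            (Finset.sum_filter _ _).symm
          _ ≤ ∑ i ∈ ({i0} : Finset (Fin k)), w i :=
            Finset.sum_le_sum_of_subset hsub
          _ = w i0 := Finset.sum_singleton _ _
      omega
    obtain ⟨j1, hj1, hj1n⟩ := key 0 (by decide)
    obtain ⟨j2, hj2, hj2n⟩ := key 1 (by decide)
    obtain ⟨j3, hj3, hj3n⟩ := key 3 (by decide)
    obtain ⟨j4, hj4, hj4n⟩ := key 4 (by decide)
    -- identify the paths of j1..j4
    have hid : ∀ j : Fin k, j ≠ i0 → (0 : Fin 7) ∈ P j → P j = [0, 5] := by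
      intro j hjn h0
      have h2 : (2 : Fin 7) ∉ P j := fun h => hjn ((hmem2 j).mp h)
      rcases walk0 (P j) (hP j).2 with h|h|h|h|h|h|h|h <;>
        first
          | exact h
          | (rw [h] at h0 h2; simp at h0 h2)
    have hid2 : ∀ j : Fin k, j ≠ i0 → (1 : Fin 7) ∈ P j → P j = [1, 5] := by
      intro j hjn h0
      have h2 : (2 : Fin 7) ∉ P j := fun h => hjn ((hmem2 j).mp h)
      rcases walk0 (P j) (hP j).2 with h|h|h|h|h|h|h|h <;>
        first
          | exact h
          | (rw [h] at h0 h2; simp at h0 h2)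
    have hid3 : ∀ j : Fin k, j ≠ i0 → (3 : Fin 7) ∈ P j → P j = [6, 3] := by
      intro j hjn h0
      have h2 : (2 : Fin 7) ∉ P j := fun h => hjn ((hmem2 j).mp h)
      rcases walk0 (P j) (hP j).2 with h|h|h|h|h|h|h|h <;>
        first
          | exact h
          | (rw [h] at h0 h2; simp at h0 h2)
    have hid4 : ∀ j : Fin k, j ≠ i0 → (4 : Fin 7) ∈ P j → P j = [6, 4] := by
      intro j hjn h0
      have h2 : (2 : Fin 7) ∉ P j := fun h => hjn ((hmem2 j).mp h)
      rcases walk0 (P j) (hP j).2 with h|h|h|h|h|h|h|h <;>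
        first
          | exact h
          | (rw [h] at h0 h2; simp at h0 h2)
    have e1 := hid j1 hj1n hj1
    have e2 := hid2 j2 hj2n hj2
    have e3 := hid3 j3 hj3n hj3
    have e4 := hid4 j4 hj4n hj4
    have d12 : j1 ≠ j2 := by intro h; rw [h, e2] at e1; simp at e1
    have d13 : j1 ≠ j3 := by intro h; rw [h, e3] at e1; simp at e1
    have d14 : j1 ≠ j4 := by intro h; rw [h, e4] at e1; simp at e1
    have d23 : j2 ≠ j3 := by intro h; rw [h, e3] at e2; simp at e2
    have d24 : j2 ≠ j4 := by intro h; rw [h, e4] at e2; simp at e2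
    have d34 : j3 ≠ j4 := by intro h; rw [h, e4] at e3; simp at e3
    have hcard : ({i0, j1, j2, j3, j4} : Finset (Fin k)).card = 5 := by
      rw [Finset.card_insert_of_notMem (by simp [Ne.symm hj1n, Ne.symm hj2n,
        Ne.symm hj3n, Ne.symm hj4n]),
        Finset.card_insert_of_notMem (by simp [d12, d13, d14]),
        Finset.card_insert_of_notMem (by simp [d23, d24]),
        Finset.card_insert_of_notMem (by simp [d34]),
        Finset.card_singleton]
    calc 5 = ({i0, j1, j2, j3, j4} : Finset (Fin k)).card := hcard.symm
      _ ≤ (Finset.univ : Finset (Fin k)).card := Finset.card_le_univ _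
      _ = k := Finset.card_univ.trans (Fintype.card_fin k)
end

section
/- Let X be an integer circulation on a graph G with ‖X‖ ≤ 1, let C be a nonnegative integer circulation with C(e) ≥ 1 on all edges, and let D be a unitary circulation with D ≡ X + C (mod 2) on every edge and cost(D) ≥ 0. Then A := (C − D + X)/2 and B := (C − D − X)/2 are well-defined nonnegative integer circulations satisfying A − B = X and cost(A) + cost(B) = cost(C) − cost(D) ≤ cost(C). -/
open Finset

def circCost {E : Type} [Fintype E] (c : E → ℝ) (Z : E → ℤ) : ℝ :=
  ∑ e, c e * (Z e : ℝ)

lemma circ_of_double {V E : Type} [Fintype E] [DecidableEq V] (src tgt : E → V)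
    (A W : E → ℤ) (h : ∀ e, 2 * A e = W e) (hW : IsCircZ src tgt W) :
    IsCircZ src tgt A := by
  intro v
  have h2 : (2 : ℤ) ≠ 0 := by norm_num
  apply mul_left_cancel₀ h2
  rw [Finset.mul_sum, Finset.mul_sum]
  calc (∑ e, 2 * if tgt e = v then A e else 0)
      = ∑ e, if tgt e = v then W e else 0 := by
        apply Finset.sum_congr rfl; intro e _
        by_cases he : tgt e = v <;> simp [he, h e]
    _ = ∑ e, if src e = v then W e else 0 := hW v
    _ = ∑ e, 2 * if src e = v then A e else 0 := by
        apply Finset.sum_congr rfl; intro e _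
        by_cases he : src e = v <;> simp [he, ← h e]

lemma circ_comb {V E : Type} [Fintype E] [DecidableEq V] (src tgt : E → V)
    (C D X : E → ℤ) (s : ℤ)
    (hC : IsCircZ src tgt C) (hD : IsCircZ src tgt D) (hX : IsCircZ src tgt X) :
    IsCircZ src tgt (fun e => C e - D e + s * X e) := by
  intro v
  have key : ∀ (f : E → V),
      (∑ e, if f e = v then C e - D e + s * X e else 0)
        = (∑ e, if f e = v then C e else 0) - (∑ e, if f e = v then D e else 0)
            + s * (∑ e, if f e = v then X e else 0) := by
    intro f
    rw [Finset.mul_sum, ← Finset.sum_sub_distrib, ← Finset.sum_add_distrib]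
    apply Finset.sum_congr rfl; intro e _; by_cases h : f e = v <;> simp [h]
  rw [key tgt, key src, hC v, hD v, hX v]

/-- Given a unitary circulation `X`, a covering circulation `C ≥ 1`, and a unitary
circulation `D` matching the parity of `X + C` with `cost(D) ≥ 0`, the circulations
`A = (C − D + X)/2` and `B = (C − D − X)/2` are well-defined, nonnegative, satisfy
`A − B = X`, and `cost(A) + cost(B) = cost(C) − cost(D) ≤ cost(C)`. -/
theorem stmt_18 {V E : Type} [Fintype E] [DecidableEq V] (src tgt : E → V)
    (c : E → ℝ) (hc : ∀ e, 0 ≤ c e)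
    (X C D : E → ℤ)
    (hX : IsCircZ src tgt X) (hC : IsCircZ src tgt C) (hD : IsCircZ src tgt D)
    (hC1 : ∀ e, 1 ≤ C e) (hXu : ∀ e, |X e| ≤ 1) (hDu : ∀ e, |D e| ≤ 1)
    (hpar : ∀ e, D e % 2 = (X e + C e) % 2) (hDcost : 0 ≤ circCost c D) :
    ∃ A B : E → ℤ,
      (∀ e, 2 * A e = C e - D e + X e) ∧ (∀ e, 2 * B e = C e - D e - X e) ∧
      IsCircZ src tgt A ∧ IsCircZ src tgt B ∧
      (∀ e, 0 ≤ A e) ∧ (∀ e, 0 ≤ B e) ∧ (∀ e, A e - B e = X e) ∧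
      circCost c A + circCost c B = circCost c C - circCost c D ∧
      circCost c A + circCost c B ≤ circCost c C := by
  set A : E → ℤ := fun e => (C e - D e + X e) / 2 with hA
  set B : E → ℤ := fun e => (C e - D e - X e) / 2 with hB
  have h2A : ∀ e, 2 * A e = C e - D e + X e := by
    intro e; have := hpar e; simp only [hA]; omega
  have h2B : ∀ e, 2 * B e = C e - D e - X e := by
    intro e; have := hpar e; simp only [hB]; omega
  have hcostEq : circCost c A + circCost c B = circCost c C - circCost c D := by
    unfold circCost
    rw [← Finset.sum_add_distrib, ← Finset.sum_sub_distrib]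
    apply Finset.sum_congr rfl; intro e _
    have hsum : (A e : ℝ) + (B e : ℝ) = (C e : ℝ) - (D e : ℝ) := by
      have : (2 : ℤ) * (A e + B e) = 2 * (C e - D e) := by
        have := h2A e; have := h2B e; ring_nf; omega
      have := congrArg (fun z : ℤ => (z : ℝ)) this
      push_cast at this; linarith
    rw [← mul_add, ← mul_sub, hsum]
  refine ⟨A, B, h2A, h2B, ?_, ?_, ?_, ?_, ?_, hcostEq, ?_⟩
  · exact circ_of_double src tgt A _ h2A
      (by simpa using circ_comb src tgt C D X 1 hC hD hX)
  · exact circ_of_double src tgt B _ h2B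
      (by have := circ_comb src tgt C D X (-1) hC hD hX
          simpa [sub_eq_add_neg] using this)
  · intro e
    have := h2A e; have := hC1 e
    have h1 := abs_le.mp (hXu e); have h2 := abs_le.mp (hDu e)
    omega
  · intro e
    have := h2B e; have := hC1 e
    have h1 := abs_le.mp (hXu e); have h2 := abs_le.mp (hDu e)
    omega
  · intro e; have := h2A e; have := h2B e; omega
  · rw [hcostEq]; linarith
end
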